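/- Let α > 0, C₁ > 0, C₂ > 0 and starting values b₁⁽¹⁾, b₁⁽²⁾ ∈ [0,1]. Define two sequences recursively for n ≥ 2 by bₙ⁽¹⁾ := C₁·(n−1)⁻¹·Σ_{n₁+n₂=n, n₁,n₂≥1} min(n₁,n₂)^α · b_{n₁}⁽¹⁾ b_{n₂}⁽²⁾ and bₙ⁽²⁾ := C₂·n·(n−1)⁻¹·Σ_{n₁+n₂=n, n₁,n₂≥1} min(n₁,n₂)^α · b_{n₁}⁽¹⁾ b_{n₂}⁽¹⁾. Then there exists γ > 1 (one may take γ := 2^{α+5}·max(C₁,C₂,1)) such that bₙ⁽¹⁾ ≤ n^{−α−2} γ^{n−1} and bₙ⁽²⁾ ≤ n^{−α−2} γ^{n−1} for all n ≥ 1. -/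

import Mathlib

/-!
Induct on `n` with the envelope `n ^ (-α - 2) * γ ^ (n - 1)`. In the `k`-th term of the
convolution sum the larger of `k` and `n - k` is at least `n / 2`, so
`min k (n - k) ^ α * k ^ (-α - 2) * (n - k) ^ (-α - 2)`
is at most `2 ^ (α + 2) * n ^ (-α - 2) * (k⁻² + (n - k)⁻²)`, and `∑ k⁻² ≤ 2` bounds the
convolution of two envelopes by `2 ^ (α + 4) * n ^ (-α - 2) * γ ^ (n - 2)`. The prefactors
`C₁ / (n - 1)` and `C₂ * n / (n - 1)` are at most `2 * max C₁ (max C₂ 1)`, which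
`γ = 2 ^ (α + 5) * max C₁ (max C₂ 1)` absorbs.
-/

open Finset

lemma sum_Ico_one_inv_sq_le_two (n : ℕ) : ∑ k ∈ Ico 1 n, ((k : ℝ) ^ 2)⁻¹ ≤ 2 := by
  simpa [← Finset.Ico_add_one_left_eq_Ioo] using sum_Ioo_inv_sq_le (α := ℝ) 0 n

lemma sum_Ico_one_inv_sub_sq_le_two {n : ℕ} : ∑ k ∈ Ico 1 n, (((n : ℝ) - k) ^ 2)⁻¹ ≤ 2 := by
  calc ∑ k ∈ Ico 1 n, (((n : ℝ) - k) ^ 2)⁻¹ = ∑ k ∈ Ico 1 n, (((n - k : ℕ) : ℝ) ^ 2)⁻¹ :=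
        sum_congr rfl fun k hk => by rw [Nat.cast_sub (mem_Ico.1 hk).2.le]
    _ = ∑ k ∈ Ico 1 n, ((k : ℝ) ^ 2)⁻¹ := by
        rw [sum_Ico_reflect (fun k => ((k : ℝ) ^ 2)⁻¹) 1 (by omega), Nat.add_sub_cancel_left,
          Nat.add_sub_cancel]
    _ ≤ 2 := sum_Ico_one_inv_sq_le_two n

lemma min_rpow_mul_rpow_mul_rpow_le {α x y : ℝ} (hα : -2 ≤ α) (hx : 0 < x) (hy : 0 < y) :
    min x y ^ α * x ^ (-α - 2) * y ^ (-α - 2) ≤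
      2 ^ (α + 2) * (x + y) ^ (-α - 2) * ((x ^ 2)⁻¹ + (y ^ 2)⁻¹) := by
  wlog hxy : x ≤ y generalizing x y
  · calc min x y ^ α * x ^ (-α - 2) * y ^ (-α - 2) = min y x ^ α * y ^ (-α - 2) * x ^ (-α - 2) := by
          rw [min_comm]; ring
      _ ≤ 2 ^ (α + 2) * (y + x) ^ (-α - 2) * ((y ^ 2)⁻¹ + (x ^ 2)⁻¹) := this hy hx (by linarith)
      _ = _ := by rw [add_comm y x]; ring
  have hx_pow : x ^ α * x ^ (-α - 2) = (x ^ 2)⁻¹ := by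
    rw [← Real.rpow_add hx, show α + (-α - 2) = -2 by ring, Real.rpow_neg hx.le]
    norm_cast
  have hy_le : y ^ (-α - 2) ≤ 2 ^ (α + 2) * (x + y) ^ (-α - 2) :=
    calc y ^ (-α - 2) ≤ ((x + y) / 2) ^ (-α - 2) :=
          Real.rpow_le_rpow_of_nonpos (by positivity) (by linarith) (by linarith)
      _ = 2 ^ (α + 2) * (x + y) ^ (-α - 2) := by
          rw [Real.div_rpow (by positivity) zero_le_two, show -α - 2 = -(α + 2) by ring,
            Real.rpow_neg zero_le_two, div_inv_eq_mul, mul_comm]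
  rw [min_eq_left hxy, hx_pow]
  calc (x ^ 2)⁻¹ * y ^ (-α - 2) ≤ ((x ^ 2)⁻¹ + (y ^ 2)⁻¹) * (2 ^ (α + 2) * (x + y) ^ (-α - 2)) :=
        mul_le_mul (le_add_of_nonneg_right (by positivity)) hy_le (by positivity) (by positivity)
    _ = _ := by ring

lemma sum_min_rpow_mul_rpow_mul_rpow_le {α : ℝ} (hα : -2 ≤ α) (n : ℕ) :
    ∑ k ∈ Ico 1 n, min (k : ℝ) (n - k) ^ α * (k : ℝ) ^ (-α - 2) * ((n : ℝ) - k) ^ (-α - 2) ≤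
      2 ^ (α + 4) * (n : ℝ) ^ (-α - 2) := by
  have hterm : ∀ k ∈ Ico 1 n,
      min (k : ℝ) (n - k) ^ α * (k : ℝ) ^ (-α - 2) * ((n : ℝ) - k) ^ (-α - 2) ≤
        2 ^ (α + 2) * (n : ℝ) ^ (-α - 2) * (((k : ℝ) ^ 2)⁻¹ + (((n : ℝ) - k) ^ 2)⁻¹) := by
    intro k hk
    obtain ⟨hk1, hkn⟩ := mem_Ico.1 hk
    have hk0 : (0 : ℝ) < k := by exact_mod_cast hk1
    have hnk : (0 : ℝ) < n - k := sub_pos.2 (by exact_mod_cast hkn)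
    simpa using min_rpow_mul_rpow_mul_rpow_le hα hk0 hnk
  calc _ ≤ ∑ k ∈ Ico 1 n,
        2 ^ (α + 2) * (n : ℝ) ^ (-α - 2) * (((k : ℝ) ^ 2)⁻¹ + (((n : ℝ) - k) ^ 2)⁻¹) :=
        sum_le_sum hterm
    _ = 2 ^ (α + 2) * (n : ℝ) ^ (-α - 2) *
        (∑ k ∈ Ico 1 n, ((k : ℝ) ^ 2)⁻¹ + ∑ k ∈ Ico 1 n, (((n : ℝ) - k) ^ 2)⁻¹) := by
        rw [← mul_sum, sum_add_distrib]
    _ ≤ 2 ^ (α + 2) * (n : ℝ) ^ (-α - 2) * (2 + 2) := by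
        gcongr
        exacts [sum_Ico_one_inv_sq_le_two n, sum_Ico_one_inv_sub_sq_le_two]
    _ = 2 ^ (α + 4) * (n : ℝ) ^ (-α - 2) := by
        rw [show α + 4 = α + 2 + 2 by ring, Real.rpow_add two_pos (α + 2), Real.rpow_two]
        ring

noncomputable def minConv (α : ℝ) (u v : ℕ → ℝ) (n : ℕ) : ℝ :=
  ∑ k ∈ Ico 1 n, min (k : ℝ) (n - k) ^ α * u k * v (n - k)

noncomputable def envelope (α γ : ℝ) (n : ℕ) : ℝ :=
  (n : ℝ) ^ (-α - 2) * γ ^ (n - 1)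

section MinConv

variable {α γ : ℝ} {u v : ℕ → ℝ} {n : ℕ}

lemma minConv_nonneg (hu : ∀ k ∈ Ico 1 n, 0 ≤ u k) (hv : ∀ k ∈ Ico 1 n, 0 ≤ v k) :
    0 ≤ minConv α u v n := by
  refine sum_nonneg fun k hk => ?_
  obtain ⟨hk1, hkn⟩ := mem_Ico.1 hk
  have hmin : (0 : ℝ) ≤ min (k : ℝ) (n - k) :=
    le_min k.cast_nonneg (sub_nonneg.2 (by exact_mod_cast hkn.le))
  exact mul_nonneg (mul_nonneg (Real.rpow_nonneg hmin α) (hu k hk))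
    (hv (n - k) (mem_Ico.2 ⟨by omega, by omega⟩))

lemma minConv_le (hα : -2 ≤ α) (hγ : 0 ≤ γ)
    (hu : ∀ k ∈ Ico 1 n, u k ∈ Set.Icc 0 (envelope α γ k))
    (hv : ∀ k ∈ Ico 1 n, v k ∈ Set.Icc 0 (envelope α γ k)) :
    minConv α u v n ≤ 2 ^ (α + 4) * (n : ℝ) ^ (-α - 2) * γ ^ (n - 2) := by
  have hterm : ∀ k ∈ Ico 1 n, min (k : ℝ) (n - k) ^ α * u k * v (n - k) ≤
      γ ^ (n - 2) * (min (k : ℝ) (n - k) ^ α * (k : ℝ) ^ (-α - 2) * ((n : ℝ) - k) ^ (-α - 2)) := by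
    intro k hk
    obtain ⟨hk1, hkn⟩ := mem_Ico.1 hk
    have hnk : n - k ∈ Ico 1 n := mem_Ico.2 ⟨by omega, by omega⟩
    have hw : (0 : ℝ) ≤ min (k : ℝ) (n - k) ^ α :=
      Real.rpow_nonneg (le_min k.cast_nonneg (sub_nonneg.2 (by exact_mod_cast hkn.le))) α
    obtain ⟨huk, huk'⟩ := hu k hk
    obtain ⟨hvk, hvk'⟩ := hv (n - k) hnk
    have hpow : γ ^ (n - 2) = γ ^ (k - 1) * γ ^ (n - k - 1) := by
      rw [← pow_add]; congr 1; omega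
    calc min (k : ℝ) (n - k) ^ α * u k * v (n - k)
        ≤ min (k : ℝ) (n - k) ^ α * envelope α γ k * envelope α γ (n - k) :=
          mul_le_mul (mul_le_mul_of_nonneg_left huk' hw) hvk' hvk
            (mul_nonneg hw (huk.trans huk'))
      _ = _ := by
          rw [envelope, envelope, hpow, Nat.cast_sub hkn.le]
          ring
  calc minConv α u v n ≤ ∑ k ∈ Ico 1 n,
        γ ^ (n - 2) * (min (k : ℝ) (n - k) ^ α * (k : ℝ) ^ (-α - 2) * ((n : ℝ) - k) ^ (-α - 2)) :=
        sum_le_sum hterm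
    _ ≤ γ ^ (n - 2) * (2 ^ (α + 4) * (n : ℝ) ^ (-α - 2)) := by
        rw [← mul_sum]
        gcongr
        exact sum_min_rpow_mul_rpow_mul_rpow_le hα n
    _ = _ := by ring

lemma mul_minConv_mem_Icc_envelope (hα : -2 ≤ α) (hγ : 0 ≤ γ) (hn : 2 ≤ n) {c : ℝ} (hc : 0 ≤ c)
    (hcγ : 2 ^ (α + 4) * c ≤ γ)
    (hu : ∀ k ∈ Ico 1 n, u k ∈ Set.Icc 0 (envelope α γ k))
    (hv : ∀ k ∈ Ico 1 n, v k ∈ Set.Icc 0 (envelope α γ k)) :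
    c * minConv α u v n ∈ Set.Icc 0 (envelope α γ n) := by
  refine ⟨mul_nonneg hc (minConv_nonneg (fun k hk => (hu k hk).1) fun k hk => (hv k hk).1), ?_⟩
  have hpow : γ ^ (n - 1) = γ * γ ^ (n - 2) := by
    rw [← pow_succ']; congr 1; omega
  calc c * minConv α u v n ≤ c * (2 ^ (α + 4) * (n : ℝ) ^ (-α - 2) * γ ^ (n - 2)) :=
        mul_le_mul_of_nonneg_left (minConv_le hα hγ hu hv) hc
    _ = 2 ^ (α + 4) * c * ((n : ℝ) ^ (-α - 2) * γ ^ (n - 2)) := by ring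
    _ ≤ γ * ((n : ℝ) ^ (-α - 2) * γ ^ (n - 2)) := by gcongr
    _ = envelope α γ n := by rw [envelope, hpow]; ring

end MinConv

theorem mem_Icc_envelope_of_rec {α γ : ℝ} (hα : -2 ≤ α) (hγ : 0 ≤ γ) {b₁ b₂ c₁ c₂ : ℕ → ℝ}
    (hc₁ : ∀ n, 2 ≤ n → 0 ≤ c₁ n ∧ 2 ^ (α + 4) * c₁ n ≤ γ)
    (hc₂ : ∀ n, 2 ≤ n → 0 ≤ c₂ n ∧ 2 ^ (α + 4) * c₂ n ≤ γ)
    (hb₁ : b₁ 1 ∈ Set.Icc 0 1) (hb₂ : b₂ 1 ∈ Set.Icc 0 1)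
    (hrec₁ : ∀ n, 2 ≤ n → b₁ n = c₁ n * minConv α b₁ b₂ n)
    (hrec₂ : ∀ n, 2 ≤ n → b₂ n = c₂ n * minConv α b₁ b₁ n) (n : ℕ) (hn : 1 ≤ n) :
    b₁ n ∈ Set.Icc 0 (envelope α γ n) ∧ b₂ n ∈ Set.Icc 0 (envelope α γ n) := by
  induction n using Nat.strong_induction_on with
  | _ n ih =>
    obtain rfl | hn2 := hn.eq_or_lt
    · simpa [envelope] using ⟨hb₁, hb₂⟩
    have ih₁ : ∀ k ∈ Ico 1 n, b₁ k ∈ Set.Icc 0 (envelope α γ k) :=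
      fun k hk => (ih k (mem_Ico.1 hk).2 (mem_Ico.1 hk).1).1
    have ih₂ : ∀ k ∈ Ico 1 n, b₂ k ∈ Set.Icc 0 (envelope α γ k) :=
      fun k hk => (ih k (mem_Ico.1 hk).2 (mem_Ico.1 hk).1).2
    rw [hrec₁ n hn2, hrec₂ n hn2]
    exact ⟨mul_minConv_mem_Icc_envelope hα hγ hn2 (hc₁ n hn2).1 (hc₁ n hn2).2 ih₁ ih₂,
      mul_minConv_mem_Icc_envelope hα hγ hn2 (hc₂ n hn2).1 (hc₂ n hn2).2 ih₁ ih₁⟩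

theorem statement_0 (α C₁ C₂ : ℝ) (hα : 0 < α) (hC₁ : 0 < C₁) (hC₂ : 0 < C₂)
    (b₁ b₂ : ℕ → ℝ)
    (hb₁0 : b₁ 1 ∈ Set.Icc (0 : ℝ) 1) (hb₂0 : b₂ 1 ∈ Set.Icc (0 : ℝ) 1)
    (hrec₁ : ∀ n, 2 ≤ n → b₁ n = C₁ / ((n : ℝ) - 1) *
      ∑ k ∈ Finset.Ico 1 n, (min k (n - k) : ℝ) ^ α * b₁ k * b₂ (n - k))
    (hrec₂ : ∀ n, 2 ≤ n → b₂ n = C₂ * (n : ℝ) / ((n : ℝ) - 1) *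
      ∑ k ∈ Finset.Ico 1 n, (min k (n - k) : ℝ) ^ α * b₁ k * b₁ (n - k)) :
    ∃ γ : ℝ, 1 < γ ∧ ∀ n, 1 ≤ n →
      b₁ n ≤ (n : ℝ) ^ (-α - 2) * γ ^ (n - 1) ∧
      b₂ n ≤ (n : ℝ) ^ (-α - 2) * γ ^ (n - 1) := by
  set M := max C₁ (max C₂ 1)
  have hC₁M : C₁ ≤ M := le_max_left _ _
  have hC₂M : C₂ ≤ M := (le_max_left C₂ 1).trans (le_max_right _ _)
  have hM1 : 1 ≤ M := (le_max_right C₂ 1).trans (le_max_right _ _)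
  have hA : (1 : ℝ) ≤ 2 ^ (α + 4) := Real.one_le_rpow one_le_two (by linarith)
  have hn1 (n : ℕ) (hn : 2 ≤ n) : (1 : ℝ) ≤ n - 1 := by
    have : (2 : ℝ) ≤ n := by exact_mod_cast hn
    linarith
  have hcoef (c : ℝ) (hc : 0 ≤ c) (hcM : c ≤ 2 * M) :
      0 ≤ c ∧ 2 ^ (α + 4) * c ≤ 2 * 2 ^ (α + 4) * M :=
    ⟨hc, by nlinarith⟩
  refine ⟨2 * 2 ^ (α + 4) * M, by nlinarith, fun n hn => ?_⟩
  have hbound := mem_Icc_envelope_of_rec (c₁ := fun n => C₁ / ((n : ℝ) - 1))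
    (c₂ := fun n => C₂ * (n : ℝ) / ((n : ℝ) - 1)) (by linarith) (by positivity)
    (fun n hn => hcoef _ (div_nonneg hC₁.le (by linarith [hn1 n hn]))
      (by linarith [div_le_self hC₁.le (hn1 n hn)]))
    (fun n hn => hcoef _ (div_nonneg (by positivity) (by linarith [hn1 n hn])) (by
      rw [div_le_iff₀ (by linarith [hn1 n hn])]
      nlinarith [hn1 n hn]))
    hb₁0 hb₂0 hrec₁ hrec₂ n hn
  exact ⟨hbound.1.2, hbound.2.2⟩
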